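/- Let f(θ) = 2cos θ, T_f = S + S*, and A_{f'} the self-adjoint closure of (i/2)((S−S*)X + X(S−S*)) on ℓ²(ℕ). Then the unilateral shift S belongs to C¹(A_{f'}) and i·ad_{A_{f'}} S = −S² + I + ½ |e₁⟩⟨e₁|. -/

import Mathlib

open scoped InnerProductSpace
open Complex

noncomputable section

/-- The `n`-th Fourier coefficient of a `2π`-periodic function `f : ℝ → ℂ`. -/
def fcoef (f : ℝ → ℂ) (n : ℤ) : ℂ :=
  (1 / (2 * Real.pi)) • ∫ θ in (0:ℝ)..(2 * Real.pi), Complex.exp (-Complex.I * n * θ) * f θ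

variable {E : Type*} [NormedAddCommGroup E] [InnerProductSpace ℂ E] [CompleteSpace E]

/-- `e` is the canonical orthonormal (Hilbert) basis of `ℓ²(ℕ)`, abstractly:
an orthonormal family with dense span. -/
def IsONBasis (e : ℕ → E) : Prop :=
  Orthonormal ℂ e ∧ (Submodule.span ℂ (Set.range e)).topologicalClosure = ⊤

/-- `T` is the Toeplitz operator with symbol `f`: `⟪e n, T (e k)⟫ = f̂(n−k)`. -/
def IsToeplitz (e : ℕ → E) (f : ℝ → ℂ) (T : E →L[ℂ] E) : Prop :=
  ∀ n k : ℕ, ⟪e n, T (e k)⟫_ℂ = fcoef f ((n : ℤ) - k)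

/-- `T` is the Hankel operator with symbol `f`: `⟪e n, T (e k)⟫ = f̂(n+k+1)`
(0-based indexing of the paper's `f̂_{n+k-1}`, `n, k ≥ 1`). -/
def IsHankel (e : ℕ → E) (f : ℝ → ℂ) (T : E →L[ℂ] E) : Prop :=
  ∀ n k : ℕ, ⟪e n, T (e k)⟫_ℂ = fcoef f ((n : ℤ) + k + 1)

/-- `X` is the (self-adjoint) position operator: `X e_n = (n+1) e_n` (0-based). -/
def IsPosOp (e : ℕ → E) (X : E →ₗ.[ℂ] E) : Prop :=
  X.adjoint = X ∧ ∀ q : ℕ, ∃ hq : e q ∈ X.domain, X ⟨e q, hq⟩ = ((q : ℂ) + 1) • e q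

/-- `A` is the self-adjoint operator `A_g`, the closure of `½(T_g X + X T_g)`;
being essentially self-adjoint, it is the unique self-adjoint operator with
matrix elements `((p+q+2)/2)·ĝ(p−q)` on the canonical basis (0-based). -/
def IsAg (e : ℕ → E) (g : ℝ → ℂ) (A : E →ₗ.[ℂ] E) : Prop :=
  A.adjoint = A ∧ ∀ q : ℕ, ∃ hq : e q ∈ A.domain, ∀ p : ℕ,
    ⟪e p, A ⟨e q, hq⟩⟫_ℂ = (((p : ℂ) + q + 2) / 2) * fcoef g ((p : ℤ) - q)

/-- `C = ad_A B`: the commutator form of `A` and `B` on `D(A) × D(A)` is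
represented by the bounded operator `C`; in particular `B ∈ C¹(A)`. -/
def CommutatorOf (A : E →ₗ.[ℂ] E) (B C : E →L[ℂ] E) : Prop :=
  ∀ φ ψ : A.domain, ⟪A φ, B (ψ : E)⟫_ℂ - ⟪(φ : E), B (A ψ)⟫_ℂ = ⟪(φ : E), C (ψ : E)⟫_ℂ

/-!
Write `x n = ⟪φ, e n⟫` and `y n = ⟪e n, ψ⟫` for `φ, ψ ∈ D(A)`. Nothing is known about `D(A)`
beyond symmetry of `A`, but that suffices to read off the coefficients of `Aφ` and `Aψ` from the
tridiagonal action `A e_q = i(2q+3)/2 e_{q+1} - i(2q+1)/2 e_{q-1}`. Expanded in the basis,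
`⟪Aφ, Sψ⟫ - ⟪φ, SAψ⟫ + i⟪φ, (1 - S²)ψ⟫` becomes a telescoping series with partial sums
`g N - g 0`, where `g N = i(N + 1/2)(x (N+1) y (N-1) + x N y N)` (`shiftBoundaryTerm`).
Hence `g N` converges; since `g N / N` is summable (the coefficients are square-summable), its
limit is `0`. What remains is the boundary value `g 0 = (i/2) x 0 y 0`, the rank-one term of the
commutator.
-/

open Filter Topology Asymptotics

theorem integral_exp_int_mul_I (m : ℤ) :
    ∫ θ in (0:ℝ)..(2 * Real.pi), Complex.exp (m * I * θ)
      = if m = 0 then (2 * Real.pi : ℂ) else 0 := by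
  split_ifs with hm
  · simp [hm]
  have hmI : (m : ℂ) * I ≠ 0 := by simp [hm]
  have hperiod : Complex.exp (m * I * (2 * Real.pi : ℝ)) = 1 := by
    rw [show (m : ℂ) * I * (2 * Real.pi : ℝ) = m * (2 * Real.pi * I) by push_cast; ring]
    exact Complex.exp_int_mul_two_pi_mul_I m
  rw [integral_exp_mul_complex hmI, hperiod]
  simp

theorem fcoef_neg_two_mul_sin (k : ℤ) :
    fcoef (fun θ => (-2 : ℂ) * Real.sin θ) k = if k = 1 then I else if k = -1 then -I else 0 := by
  have hexp (m : ℤ) : IntervalIntegrable (fun θ : ℝ => Complex.exp (m * I * θ)) MeasureTheory.volume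
      0 (2 * Real.pi) :=
    (by fun_prop : Continuous fun θ : ℝ => Complex.exp (m * I * θ)).intervalIntegrable _ _
  -- `-2 sin θ = I (e^{iθ} - e^{-iθ})`
  have hsin (θ : ℝ) : Complex.exp (-I * k * θ) * ((-2 : ℂ) * Real.sin θ)
      = I * Complex.exp ((1 - k : ℤ) * I * θ) - I * Complex.exp ((-1 - k : ℤ) * I * θ) := by
    rw [Complex.ofReal_sin, Complex.sin]
    rw [show ((1 - k : ℤ) : ℂ) * I * θ = θ * I + -I * k * θ by push_cast; ring,
      show ((-1 - k : ℤ) : ℂ) * I * θ = -θ * I + -I * k * θ by push_cast; ring,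
      Complex.exp_add, Complex.exp_add]
    ring
  have hπ : (Real.pi : ℂ) ≠ 0 := by exact_mod_cast Real.pi_ne_zero
  simp only [fcoef, hsin]
  rw [intervalIntegral.integral_sub ((hexp _).const_mul I) ((hexp _).const_mul I),
    intervalIntegral.integral_const_mul, intervalIntegral.integral_const_mul,
    integral_exp_int_mul_I, integral_exp_int_mul_I, Complex.real_smul]
  split_ifs <;> first | omega | (push_cast; field_simp; ring)

theorem eq_zero_of_tendsto_natCast_mul {𝕜 : Type*} [RCLike 𝕜] {a : ℕ → 𝕜} {L : 𝕜}
    (ha : Summable fun n => ‖a n‖) (h : Tendsto (fun n : ℕ => (n : 𝕜) * a n) atTop (𝓝 L)) :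
    L = 0 := by
  by_contra hL
  have hL' : 0 < ‖L‖ := norm_pos_iff.2 hL
  -- eventually `n ‖a n‖ ≥ ‖L‖ / 2`, so `∑ 1/n` would converge
  have hbig : (fun n : ℕ => (n : ℝ)⁻¹) =O[atTop] fun n => ‖a n‖ := by
    refine IsBigO.of_bound (2 / ‖L‖) ?_
    filter_upwards [h.norm.eventually_const_lt (half_lt_self hL'), eventually_gt_atTop 0]
      with n hn hn0
    rw [norm_mul, RCLike.norm_natCast] at hn
    have hn0' : (0 : ℝ) < n := by exact_mod_cast hn0
    rw [norm_inv, Real.norm_natCast, norm_norm, inv_le_iff_one_le_mul₀ hn0']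
    rw [div_lt_iff₀ two_pos] at hn
    calc (1 : ℝ) = 2 / ‖L‖ * (‖L‖ / 2) := by field_simp
      _ ≤ 2 / ‖L‖ * (n * ‖a n‖) := by gcongr; linarith
      _ = 2 / ‖L‖ * ‖a n‖ * n := by ring
  exact Real.not_summable_natCast_inv (summable_of_isBigO_nat ha hbig)

theorem Orthonormal.summable_norm_inner_mul_inner {𝕜 F ι : Type*} [RCLike 𝕜]
    [NormedAddCommGroup F] [InnerProductSpace 𝕜 F] {v w : ι → F}
    (hv : Orthonormal 𝕜 v) (hw : Orthonormal 𝕜 w) (x y : F) :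
    Summable fun i => ‖⟪x, v i⟫_𝕜 * ⟪w i, y⟫_𝕜‖ := by
  refine Summable.of_nonneg_of_le (fun _ => norm_nonneg _) (fun i => ?_)
    (((hv.inner_products_summable x).add (hw.inner_products_summable y)).div_const 2)
  rw [norm_mul, norm_inner_symm]
  nlinarith [two_mul_le_add_sq ‖⟪v i, x⟫_𝕜‖ ‖⟪w i, y⟫_𝕜‖]

namespace IsONBasis

theorem dense_of_forall_mem {F : Type*} [NormedAddCommGroup F] [InnerProductSpace ℂ F]
    {e : ℕ → F} (he : IsONBasis e) {D : Submodule ℂ F} (hD : ∀ n, e n ∈ D) :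
    Dense (D : Set F) := by
  rw [Submodule.dense_iff_topologicalClosure_eq_top, eq_top_iff, ← he.2]
  exact Submodule.topologicalClosure_mono (Submodule.span_le.mpr (Set.range_subset_iff.mpr hD))

variable {e : ℕ → E}

def hilbertBasis (he : IsONBasis e) : HilbertBasis ℕ ℂ E := HilbertBasis.mk he.1 he.2.ge

@[simp]
theorem coe_hilbertBasis (he : IsONBasis e) : ⇑he.hilbertBasis = e := HilbertBasis.coe_mk _ _

theorem ext_inner_left (he : IsONBasis e) {u v : E} (h : ∀ i, ⟪e i, u⟫_ℂ = ⟪e i, v⟫_ℂ) :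
    u = v :=
  he.hilbertBasis.repr.injective <| lp.ext <| funext fun i => by
    simpa only [HilbertBasis.repr_apply_apply, coe_hilbertBasis] using h i

theorem hasSum_inner_map_mul_inner (he : IsONBasis e) (T : E →L[ℂ] E) (x y : E) :
    HasSum (fun n => ⟪x, T (e n)⟫_ℂ * ⟪e n, y⟫_ℂ) ⟪x, T y⟫_ℂ := by
  simpa only [coe_hilbertBasis, ContinuousLinearMap.adjoint_inner_left] using
    he.hilbertBasis.hasSum_inner_mul_inner (ContinuousLinearMap.adjoint T x) y

end IsONBasis

section Shift

variable {e : ℕ → E} {Sh : E →L[ℂ] E}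

theorem inner_e_zero_shift (he : IsONBasis e) (hSh : ∀ n, Sh (e n) = e (n + 1)) (x : E) :
    ⟪e 0, Sh x⟫_ℂ = 0 := by
  have := he.hasSum_inner_map_mul_inner Sh (e 0) x
  simp only [hSh, orthonormal_iff_ite.mp he.1, Nat.zero_ne_add_one, if_false, zero_mul] at this
  exact this.unique hasSum_zero

theorem inner_e_succ_shift (he : IsONBasis e) (hSh : ∀ n, Sh (e n) = e (n + 1)) (k : ℕ) (x : E) :
    ⟪e (k + 1), Sh x⟫_ℂ = ⟪e k, x⟫_ℂ := by
  have := he.hasSum_inner_map_mul_inner Sh (e (k + 1)) x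
  simp only [hSh, orthonormal_iff_ite.mp he.1, add_left_inj, ite_mul, one_mul, zero_mul] at this
  rw [this.unique (hasSum_single k fun n hn => if_neg (Ne.symm hn)), if_pos rfl]

end Shift

namespace IsAg

variable {e : ℕ → E} {g : ℝ → ℂ} {A : E →ₗ.[ℂ] E}

theorem mem_domain (hA : IsAg e g A) (q : ℕ) : e q ∈ A.domain := (hA.2 q).1

theorem isFormalAdjoint (he : IsONBasis e) (hA : IsAg e g A) : A.IsFormalAdjoint A := by
  have h := LinearPMap.adjoint_isFormalAdjoint (he.dense_of_forall_mem hA.mem_domain)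
  rwa [hA.1] at h

theorem apply_e_zero (he : IsONBasis e) (hA : IsAg e (fun θ => (-2 : ℂ) * Real.sin θ) A) :
    A ⟨e 0, hA.mem_domain 0⟩ = (I * (3 / 2)) • e 1 := by
  refine he.ext_inner_left fun p => ?_
  obtain ⟨_, hmat⟩ := hA.2 0
  rw [hmat p, fcoef_neg_two_mul_sin, inner_smul_right, orthonormal_iff_ite.mp he.1]
  split_ifs <;> first | omega | (subst_vars; push_cast; ring)

theorem apply_e_succ (he : IsONBasis e) (hA : IsAg e (fun θ => (-2 : ℂ) * Real.sin θ) A)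
    (n : ℕ) : A ⟨e (n + 1), hA.mem_domain (n + 1)⟩
      = (I * ((2 * n + 5) / 2)) • e (n + 2) - (I * ((2 * n + 3) / 2)) • e n := by
  refine he.ext_inner_left fun p => ?_
  obtain ⟨_, hmat⟩ := hA.2 (n + 1)
  rw [hmat p, fcoef_neg_two_mul_sin, inner_sub_right, inner_smul_right, inner_smul_right,
    orthonormal_iff_ite.mp he.1, orthonormal_iff_ite.mp he.1]
  split_ifs <;> first | omega | (subst_vars; push_cast; ring)

end IsAg

/-- `⟪e n, Sh ψ⟫` is the coefficient `⟪e (n - 1), ψ⟫`, read as `0` at `n = 0`. -/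
def shiftBoundaryTerm (e : ℕ → E) (Sh : E →L[ℂ] E) (φ ψ : E) (n : ℕ) : ℂ :=
  I * ((2 * n + 1) / 2) * (⟪φ, e (n + 1)⟫_ℂ * ⟪e n, Sh ψ⟫_ℂ + ⟪φ, e n⟫_ℂ * ⟪e n, ψ⟫_ℂ)

section Commutator

variable {e : ℕ → E} {Sh : E →L[ℂ] E} {A : E →ₗ.[ℂ] E}

theorem shiftBoundaryTerm_succ_sub (he : IsONBasis e) (hSh : ∀ n, Sh (e n) = e (n + 1))
    (hA : IsAg e (fun θ => (-2 : ℂ) * Real.sin θ) A) (φ ψ : A.domain) (n : ℕ) :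
    shiftBoundaryTerm e Sh φ ψ (n + 1) - shiftBoundaryTerm e Sh φ ψ n
      = ⟪A φ, e (n + 1)⟫_ℂ * ⟪e n, (ψ : E)⟫_ℂ - ⟪(φ : E), e (n + 1)⟫_ℂ * ⟪e n, A ψ⟫_ℂ
        - I * (⟪(φ : E), e (n + 2)⟫_ℂ * ⟪e n, (ψ : E)⟫_ℂ)
        + I * (⟪(φ : E), e n⟫_ℂ * ⟪e n, (ψ : E)⟫_ℂ) := by
  have hsymm := hA.isFormalAdjoint he
  have hAφ (k : ℕ) : ⟪A φ, e (k + 1)⟫_ℂ = ⟪(φ : E), A ⟨e (k + 1), hA.mem_domain _⟩⟫_ℂ :=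
    hsymm φ ⟨_, _⟩
  have hAψ (k : ℕ) : ⟪e k, A ψ⟫_ℂ = ⟪A ⟨e k, hA.mem_domain _⟩, (ψ : E)⟫_ℂ :=
    (hsymm ⟨_, _⟩ ψ).symm
  rcases n with _ | n <;>
  simp only [shiftBoundaryTerm, hAφ, hAψ, hA.apply_e_zero he, hA.apply_e_succ he,
    inner_e_zero_shift he hSh, inner_e_succ_shift he hSh, inner_sub_left, inner_sub_right,
    inner_smul_left, inner_smul_right, map_mul, map_div₀, Complex.conj_I, Complex.conj_natCast,
    map_add, map_ofNat] <;>
  push_cast <;> ring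

theorem tendsto_shiftBoundaryTerm (he : IsONBasis e) (hSh : ∀ n, Sh (e n) = e (n + 1))
    (hA : IsAg e (fun θ => (-2 : ℂ) * Real.sin θ) A) (φ ψ : A.domain) :
    Tendsto (shiftBoundaryTerm e Sh φ ψ) atTop
      (𝓝 (⟪A φ, Sh (ψ : E)⟫_ℂ - ⟪(φ : E), Sh (A ψ)⟫_ℂ - I * ⟪(φ : E), Sh (Sh (ψ : E))⟫_ℂ
        + I * ⟪(φ : E), (ψ : E)⟫_ℂ + shiftBoundaryTerm e Sh φ ψ 0)) := by
  have hseries := (((he.hasSum_inner_map_mul_inner Sh (A φ) ψ).sub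
    (he.hasSum_inner_map_mul_inner Sh φ (A ψ))).sub
    ((he.hasSum_inner_map_mul_inner (Sh ∘L Sh) φ ψ).mul_left I)).add
    ((he.hasSum_inner_map_mul_inner 1 φ ψ).mul_left I)
  simp only [ContinuousLinearMap.comp_apply, one_apply_eq_self, hSh,
    ← shiftBoundaryTerm_succ_sub he hSh hA] at hseries
  have hpartial := hseries.tendsto_sum_nat.add_const (shiftBoundaryTerm e Sh φ ψ 0)
  simpa only [Finset.sum_range_sub, sub_add_cancel] using hpartial

end Commutator

theorem eq_zero_of_tendsto_shiftBoundaryTerm {F : Type*} [NormedAddCommGroup F]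
    [InnerProductSpace ℂ F] {e : ℕ → F} {Sh : F →L[ℂ] F} (he : Orthonormal ℂ e) {φ ψ : F} {L : ℂ}
    (h : Tendsto (shiftBoundaryTerm e Sh φ ψ) atTop (𝓝 L)) : L = 0 := by
  set a : ℕ → ℂ := fun n => ⟪φ, e (n + 1)⟫_ℂ * ⟪e n, Sh ψ⟫_ℂ + ⟪φ, e n⟫_ℂ * ⟪e n, ψ⟫_ℂ
  have ha : Summable fun n => ‖a n‖ :=
    .of_nonneg_of_le (fun _ => norm_nonneg _) (fun _ => norm_add_le _ _)
      (((he.comp _ (add_left_injective 1)).summable_norm_inner_mul_inner he φ (Sh ψ)).add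
        (he.summable_norm_inner_mul_inner he φ ψ))
  have hna : Tendsto (fun n : ℕ => (n : ℂ) * a n) atTop (𝓝 (-I * L - 0 / 2)) := by
    refine ((h.const_mul (-I)).sub (ha.of_norm.tendsto_atTop_zero.div_const 2)).congr fun n => ?_
    show -I * (I * ((2 * n + 1) / 2) * a n) - a n / 2 = n * a n
    linear_combination (-(n + 1 / 2) * a n) * Complex.I_sq
  simpa using eq_zero_of_tendsto_natCast_mul ha hna

theorem stmt_15 (e : ℕ → E) (he : IsONBasis e)
    (Sh : E →L[ℂ] E) (hSh : ∀ n : ℕ, Sh (e n) = e (n + 1))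
    (A : E →ₗ.[ℂ] E) (hA : IsAg e (fun θ => (-2 : ℂ) * Complex.ofReal (Real.sin θ)) A) :
    CommutatorOf A Sh ((-Complex.I) •
      (-(Sh ∘L Sh) + 1 + ((1 : ℂ) / 2) • ((innerSL ℂ (e 0)).smulRight (e 0)))) := by
  intro φ ψ
  have hlim := eq_zero_of_tendsto_shiftBoundaryTerm he.1 (tendsto_shiftBoundaryTerm he hSh hA φ ψ)
  simp only [shiftBoundaryTerm, inner_e_zero_shift he hSh] at hlim
  simp only [smul_apply, add_apply, neg_apply, one_apply_eq_self, ContinuousLinearMap.comp_apply,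
    ContinuousLinearMap.smulRight_apply, innerSL_apply_apply, inner_smul_right, inner_add_right,
    inner_neg_right]
  linear_combination hlim
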